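/- Suppose G = (ℤ/3)² acts faithfully on ℙ²(ℂ) such that the action is free outside a finite set. Then there exist generators g₁, g₂ of G and homogeneous coordinates (x₀:x₁:x₂) such that g₁(x₀:x₁:x₂) = (x₀: ωx₁: ω²x₂) and g₂(x₀:x₁:x₂) = (x₁:x₂:x₀), where ω is a primitive third root of unity. -/

import Mathlib

open scoped LinearAlgebra.Projectivization

noncomputable section

/-- The complex projective plane `ℙ²(ℂ)`. -/
abbrev P2 := ℙ ℂ (Fin 3 → ℂ)

/-- The projective transformation of `ℙ²(ℂ)` induced by a linear automorphism of `ℂ³`. -/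
def projMap (φ : (Fin 3 → ℂ) ≃ₗ[ℂ] (Fin 3 → ℂ)) : P2 → P2 :=
  Projectivization.map φ.toLinearMap φ.injective

/-- The diagonal linear automorphism of `ℂ³` with entries `d`. -/
def diagEquiv (d : Fin 3 → ℂˣ) : (Fin 3 → ℂ) ≃ₗ[ℂ] (Fin 3 → ℂ) :=
  LinearEquiv.piCongrRight fun i => LinearEquiv.smulOfUnit (d i)

/-- The cyclic coordinate shift `(x₀, x₁, x₂) ↦ (x₁, x₂, x₀)` of `ℂ³`. -/
def cycEquiv : (Fin 3 → ℂ) ≃ₗ[ℂ] (Fin 3 → ℂ) :=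
  LinearEquiv.funCongrLeft ℂ ℂ (Equiv.addRight (1 : Fin 3))

/-!
Lift generators `g₁, g₂` of `G` to linear maps `A, B` of `ℂ³`. Since `g₁, g₂` commute and have
order 3, `AB = ζBA` and `B³ = c³` for scalars `ζ, c`, and `ζ³ = 1`. If `ζ = 1`, then `A` is
diagonalizable (as `A³` is scalar) with one-dimensional eigenspaces (as `g₁` has finitely many
fixed points), so `B` preserves two eigenlines `ℂx₀, ℂx₁` of `A`. The characters of `G` on these
lines take values in cube roots of unity, so they agree on some `g ≠ 1`; then `g` fixes the whole
projective line through `x₀` and `x₁`, a contradiction. Hence `ζ` is a primitive cube root of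
unity; if `Av = av`, then `v`, `c⁻²B²v`, `c⁻¹Bv` are eigenvectors of `A` with eigenvalues
`a, aζ², aζ`, and `B` permutes them cyclically up to the factor `c`.
-/

open Projectivization

local notation "ℂ³" => Fin 3 → ℂ

section LinearAlgebra

variable {K V : Type*} [Field K] [AddCommGroup V] [Module K V]

lemma LinearEquiv.pow_apply_eq_smul {φ : V ≃ₗ[K] V} {x : V} {μ : K} (hx : φ x = μ • x)
    (n : ℕ) : (φ ^ n) x = μ ^ n • x := by
  induction n with
  | zero => simp
  | succ n ih => rw [pow_succ, LinearEquiv.mul_apply, hx, map_smul, ih, smul_smul, pow_succ']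

lemma LinearEquiv.pow_eq_of_apply_eq_smul {φ : V ≃ₗ[K] V} {x : V} {μ c : K} (hx₀ : x ≠ 0)
    (hx : φ x = μ • x) {n : ℕ} (h : ∀ v, (φ ^ n) v = c • v) : μ ^ n = c :=
  smul_left_injective K hx₀ ((φ.pow_apply_eq_smul hx n).symm.trans (h x))

lemma LinearEquiv.apply_pow_apply_of_apply_apply_eq_smul {A B : V ≃ₗ[K] V} {ζ : K}
    (hAB : ∀ v, A (B v) = ζ • B (A v)) (n : ℕ) (v : V) :
    A ((B ^ n) v) = ζ ^ n • (B ^ n) (A v) := by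
  induction n generalizing v with
  | zero => simp
  | succ n ih => rw [pow_succ, LinearEquiv.mul_apply, ih, hAB, LinearEquiv.mul_apply, map_smul,
      smul_smul, pow_succ]

lemma LinearEquiv.pow_eq_one_of_apply_apply_eq_smul [Nontrivial V] {A B : V ≃ₗ[K] V} {ζ c : K}
    (hAB : ∀ v, A (B v) = ζ • B (A v)) (hc : c ≠ 0) {n : ℕ} (hB : ∀ v, (B ^ n) v = c • v) :
    ζ ^ n = 1 := by
  obtain ⟨v, hv⟩ := exists_ne (0 : V)
  have h := LinearEquiv.apply_pow_apply_of_apply_apply_eq_smul hAB n v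
  rw [hB, hB, map_smul, smul_smul] at h
  exact (mul_eq_right₀ hc).1 (smul_left_injective K (A.map_ne_zero_iff.2 hv) h).symm

lemma LinearEquiv.isSemisimple_of_pow_apply_eq_smul {φ : V ≃ₗ[K] V} {n : ℕ} (hn : (n : K) ≠ 0)
    {c : K} (hc : c ≠ 0) (h : ∀ v, (φ ^ n) v = c • v) :
    Module.End.IsSemisimple (φ : Module.End K V) := by
  refine Module.End.isSemisimple_of_squarefree_aeval_eq_zero
    (Polynomial.separable_X_pow_sub_C c hn hc).squarefree (LinearMap.ext fun v ↦ ?_)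
  have hv := h v
  rw [LinearEquiv.coe_pow] at hv
  simp [Module.End.coe_pow, hv]

lemma Module.End.IsSemisimple.exists_linearIndependent_eigenvectors [IsAlgClosed K]
    [FiniteDimensional K V] {f : Module.End K V} (hf : f.IsSemisimple)
    (hscalar : ∀ a : K, f ≠ a • 1) :
    ∃ (μ ν : K) (x y : V), f x = μ • x ∧ f y = ν • y ∧ LinearIndependent K ![x, y] := by
  have : Nontrivial V := by
    by_contra hV
    rw [not_nontrivial_iff_subsingleton] at hV
    exact hscalar 0 (Subsingleton.elim _ _)
  obtain ⟨μ, hμ⟩ := Module.End.exists_eigenvalue f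
  obtain ⟨x, hx⟩ := hμ.exists_hasEigenvector
  by_contra! hsingle
  apply hscalar μ
  have htop : f.eigenspace μ = ⊤ := by
    rw [eq_top_iff, ← hf.iSup_eigenspace_eq_top]
    refine iSup_le fun ν y hy ↦ ?_
    by_cases hy0 : y = 0
    · simp [hy0]
    obtain rfl | hνμ := eq_or_ne ν μ
    · exact hy
    refine absurd ?_ (hsingle μ ν x y hx.apply_eq_smul (Module.End.mem_eigenspace_iff.1 hy))
    refine Module.End.eigenvectors_linearIndependent' f ![μ, ν] ?_ ![x, y] fun i ↦ ?_
    · intro i j hij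
      fin_cases i <;> fin_cases j <;> simp_all [eq_comm]
    · fin_cases i
      exacts [hx, ⟨hy, hy0⟩]
  exact LinearMap.ext fun v ↦ Module.End.mem_eigenspace_iff.1 (htop ▸ Submodule.mem_top)

end LinearAlgebra

lemma exists_pow_mul_pow_eq_of_pow_three_eq {K : Type*} [Field K] {a₀ a₁ b₀ b₁ : K}
    (hb₀ : b₀ ≠ 0) (ha : a₀ ^ 3 = a₁ ^ 3) (hb : b₀ ^ 3 = b₁ ^ 3) :
    ∃ i j : ZMod 3, (i, j) ≠ 0 ∧ a₀ ^ i.val * b₀ ^ j.val = a₁ ^ i.val * b₁ ^ j.val := by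
  by_cases h₁ : a₀ = a₁
  · exact ⟨1, 0, by decide, by simp [h₁]⟩
  by_cases h₂ : b₀ = b₁
  · exact ⟨0, 1, by decide, by simp [h₂]⟩
  have qa : a₀ ^ 2 + a₀ * a₁ + a₁ ^ 2 = 0 := by
    refine (mul_eq_zero.1 ?_).resolve_left (sub_ne_zero.2 h₁)
    linear_combination ha
  have qb : b₀ ^ 2 + b₀ * b₁ + b₁ ^ 2 = 0 := by
    refine (mul_eq_zero.1 ?_).resolve_left (sub_ne_zero.2 h₂)
    linear_combination hb
  -- the ratios `a₁ / a₀` and `b₁ / b₀` are primitive cube roots of unity: equal or inverse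
  rcases mul_eq_zero.1 (show (a₁ * b₀ - a₀ * b₁) * (a₀ * b₀ - a₁ * b₁) = 0 by
    linear_combination a₀ * a₁ * qb - b₀ * b₁ * qa) with h | h
  · refine ⟨1, 2, by decide, mul_right_cancel₀ hb₀ ?_⟩
    show a₀ ^ 1 * b₀ ^ 2 * b₀ = a₁ ^ 1 * b₁ ^ 2 * b₀
    linear_combination a₀ * hb - b₁ ^ 2 * h
  · refine ⟨1, 1, by decide, ?_⟩
    show a₀ ^ 1 * b₀ ^ 1 = a₁ ^ 1 * b₁ ^ 1
    linear_combination h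

lemma ZMod.ofAdd_prod_eq_pow_mul_pow {n : ℕ} [NeZero n] (i j : ZMod n) :
    Multiplicative.ofAdd (i, j) =
      Multiplicative.ofAdd ((1 : ZMod n), (0 : ZMod n)) ^ i.val *
        Multiplicative.ofAdd ((0 : ZMod n), (1 : ZMod n)) ^ j.val := by
  simp [← ofAdd_nsmul, ← ofAdd_add]

lemma ZMod.closure_ofAdd_prod_eq_top {n : ℕ} [NeZero n] :
    Subgroup.closure ({.ofAdd (1, 0), .ofAdd (0, 1)} : Set (Multiplicative (ZMod n × ZMod n))) =
      ⊤ := by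
  refine eq_top_iff.2 fun g _ ↦ ?_
  obtain ⟨⟨i, j⟩, rfl⟩ := Multiplicative.ofAdd.surjective g
  rw [ZMod.ofAdd_prod_eq_pow_mul_pow i j]
  exact mul_mem (pow_mem (Subgroup.subset_closure (by simp)) _)
    (pow_mem (Subgroup.subset_closure (by simp)) _)

lemma projMap_eq_of_forall_eq_smul {φ ψ : ℂ³ ≃ₗ[ℂ] ℂ³} {c : ℂ} (h : ∀ v, φ v = c • ψ v) :
    projMap φ = projMap ψ := by
  funext p
  induction p using Projectivization.ind with
  | h v hv => exact (mk_eq_mk_iff' ℂ _ _ _ _).2 ⟨c, (h v).symm⟩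

lemma exists_forall_eq_smul_of_projMap_eq {φ ψ : ℂ³ ≃ₗ[ℂ] ℂ³} (h : projMap φ = projMap ψ) :
    ∃ c : ℂˣ, ∀ v, φ v = (c : ℂ) • ψ v := by
  obtain ⟨a, ha⟩ := (ψ.symm.toLinearMap ∘ₗ φ.toLinearMap)
    |>.exists_eq_smul_id_of_forall_notLinearIndependent fun v ↦ by
      by_cases hv : v = 0
      · simp [hv, linearIndependent_fin2]
      rw [LinearIndependent.pair_iff' hv, not_forall_not]
      obtain ⟨c, hc⟩ := (mk_eq_mk_iff' ℂ _ _ _ _).1 (congrFun h (mk ℂ v hv))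
      exact ⟨c, by simpa using congrArg ψ.symm hc⟩
  have hφ : ∀ v, φ v = a • ψ v := fun v ↦ by
    simpa using congrArg ψ (LinearMap.congr_fun ha v)
  have ha0 : a ≠ 0 := by
    rintro rfl
    simpa using hφ (Pi.single 0 1)
  exact ⟨Units.mk0 a ha0, hφ⟩

lemma infinite_fixedPoints_projMap {φ : ℂ³ ≃ₗ[ℂ] ℂ³} {x y : ℂ³} {μ : ℂ}
    (hxy : LinearIndependent ℂ ![x, y]) (hx : φ x = μ • x) (hy : φ y = μ • y) :
    {p : P2 | projMap φ p = p}.Infinite := by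
  have hne : ∀ t : ℂ, x + t • y ≠ 0 := fun t h ↦
    one_ne_zero (LinearIndependent.pair_iff.1 hxy 1 t (by simpa using h)).1
  refine Set.infinite_of_injective_forall_mem (f := fun t : ℂ ↦ mk ℂ (x + t • y) (hne t))
    (fun s t hst ↦ ?_) (fun t ↦ ?_)
  · obtain ⟨a, ha⟩ := (mk_eq_mk_iff' ℂ _ _ _ _).1 hst
    obtain ⟨ha1, hat⟩ := LinearIndependent.pair_iff.1 hxy (a - 1) (a * t - s)
      (by rw [← sub_eq_zero] at ha; rw [← ha]; module)
    rw [sub_eq_zero.1 ha1, one_mul, sub_eq_zero] at hat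
    exact hat.symm
  · exact (mk_eq_mk_iff' ℂ _ _ _ _).2 ⟨μ, by simp [hx, hy, smul_comm μ t]⟩

section Lift

variable {G : Type*} [Group G] (ρ : G →* Equiv.Perm P2)

def IsProjLift (g : G) (φ : ℂ³ ≃ₗ[ℂ] ℂ³) : Prop :=
  ∀ p, ρ g p = projMap φ p

variable {ρ}

lemma isProjLift_one : IsProjLift ρ 1 1 := fun p ↦ by
  induction p using Projectivization.ind with
  | h v hv => rw [map_one]; rfl

lemma IsProjLift.mul {g h : G} {φ ψ : ℂ³ ≃ₗ[ℂ] ℂ³} (hg : IsProjLift ρ g φ)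
    (hh : IsProjLift ρ h ψ) : IsProjLift ρ (g * h) (φ * ψ) := fun p ↦ by
  induction p using Projectivization.ind with
  | h v hv => rw [map_mul, Equiv.Perm.mul_apply, hh, hg]; rfl

lemma IsProjLift.pow {g : G} {φ : ℂ³ ≃ₗ[ℂ] ℂ³} (hg : IsProjLift ρ g φ) :
    ∀ n : ℕ, IsProjLift ρ (g ^ n) (φ ^ n)
  | 0 => by rw [pow_zero, pow_zero]; exact isProjLift_one
  | n + 1 => by rw [pow_succ, pow_succ]; exact (hg.pow n).mul hg

lemma IsProjLift.exists_eq_smul {g : G} {φ ψ : ℂ³ ≃ₗ[ℂ] ℂ³} (hφ : IsProjLift ρ g φ)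
    (hψ : IsProjLift ρ g ψ) : ∃ c : ℂˣ, ∀ v, φ v = (c : ℂ) • ψ v :=
  exists_forall_eq_smul_of_projMap_eq (funext fun p ↦ (hφ p).symm.trans (hψ p))

lemma IsProjLift.exists_pow_eq_smul {g : G} {φ : ℂ³ ≃ₗ[ℂ] ℂ³} (hφ : IsProjLift ρ g φ) {n : ℕ}
    (hn : g ^ n = 1) : ∃ c : ℂˣ, ∀ v, (φ ^ n) v = (c : ℂ) • v :=
  (hn ▸ hφ.pow n).exists_eq_smul isProjLift_one

lemma IsProjLift.exists_apply_apply_eq_smul {g h : G} {φ ψ : ℂ³ ≃ₗ[ℂ] ℂ³} (hgh : Commute g h)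
    (hφ : IsProjLift ρ g φ) (hψ : IsProjLift ρ h ψ) :
    ∃ c : ℂˣ, ∀ v, φ (ψ v) = (c : ℂ) • ψ (φ v) :=
  (hgh.eq ▸ hφ.mul hψ).exists_eq_smul (hψ.mul hφ)

lemma IsProjLift.not_linearIndependent {g : G} {φ : ℂ³ ≃ₗ[ℂ] ℂ³} (hφ : IsProjLift ρ g φ)
    (hfin : {p : P2 | ρ g p = p}.Finite) {x y : ℂ³} {μ : ℂ} (hx : φ x = μ • x)
    (hy : φ y = μ • y) : ¬ LinearIndependent ℂ ![x, y] := fun hxy ↦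
  infinite_fixedPoints_projMap hxy hx hy (by simpa only [hφ _] using hfin)

end Lift

lemma false_of_isProjLift_of_commute {ρ : Multiplicative (ZMod 3 × ZMod 3) →* Equiv.Perm P2}
    (hfree : ∀ g, g ≠ 1 → {p : P2 | ρ g p = p}.Finite) {A B : ℂ³ ≃ₗ[ℂ] ℂ³}
    (hA : IsProjLift ρ (.ofAdd (1, 0)) A) (hB : IsProjLift ρ (.ofAdd (0, 1)) B)
    (hAB : ∀ v, A (B v) = B (A v)) : False := by
  have hfinA := hfree _ (by decide : Multiplicative.ofAdd ((1 : ZMod 3), (0 : ZMod 3)) ≠ 1)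
  have hline {μ : ℂ} {x y : ℂ³} (hx₀ : x ≠ 0) (hx : A x = μ • x) (hy : A y = μ • y) :
      ∃ t : ℂ, y = t • x := by
    by_contra! h
    exact hA.not_linearIndependent hfinA hx hy
      ((LinearIndependent.pair_iff' hx₀).2 fun t ht ↦ h t ht.symm)
  have hscalar (a : ℂ) : (A : Module.End ℂ ℂ³) ≠ a • 1 := fun h ↦
    hA.not_linearIndependent hfinA (LinearMap.congr_fun h (Pi.single 0 1))
      (LinearMap.congr_fun h (Pi.single 1 1))
      ((LinearIndependent.pair_iff' (by simp)).2 fun t ht ↦ by simpa using congrFun ht 1)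
  obtain ⟨c₁, hc₁⟩ := hA.exists_pow_eq_smul (n := 3) (by decide)
  obtain ⟨c₂, hc₂⟩ := hB.exists_pow_eq_smul (n := 3) (by decide)
  obtain ⟨μ₀, μ₁, x₀, x₁, hx₀, hx₁, hind⟩ :=
    (A.isSemisimple_of_pow_apply_eq_smul (by norm_num) c₁.ne_zero hc₁)
      |>.exists_linearIndependent_eigenvectors hscalar
  change A x₀ = μ₀ • x₀ at hx₀
  change A x₁ = μ₁ • x₁ at hx₁
  have hx₀0 : x₀ ≠ 0 := hind.ne_zero 0
  have hx₁0 : x₁ ≠ 0 := hind.ne_zero 1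
  obtain ⟨b₀, hb₀⟩ := hline hx₀0 hx₀ (by rw [hAB, hx₀, map_smul])
  obtain ⟨b₁, hb₁⟩ := hline hx₁0 hx₁ (by rw [hAB, hx₁, map_smul])
  have hb₀3 := B.pow_eq_of_apply_eq_smul hx₀0 hb₀ hc₂
  -- `g = g₁ ^ i * g₂ ^ j ≠ 1` has the same eigenvalue on `x₀` and `x₁`
  obtain ⟨i, j, hij, heq⟩ := exists_pow_mul_pow_eq_of_pow_three_eq
    (ne_zero_pow three_ne_zero (hb₀3 ▸ c₂.ne_zero))
    ((A.pow_eq_of_apply_eq_smul hx₀0 hx₀ hc₁).trans (A.pow_eq_of_apply_eq_smul hx₁0 hx₁ hc₁).symm)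
    (hb₀3.trans (B.pow_eq_of_apply_eq_smul hx₁0 hb₁ hc₂).symm)
  have hg := (hA.pow i.val).mul (hB.pow j.val)
  rw [← ZMod.ofAdd_prod_eq_pow_mul_pow] at hg
  have heigen {x : ℂ³} {μ b : ℂ} (hμ : A x = μ • x) (hb : B x = b • x) :
      (A ^ i.val * B ^ j.val) x = (μ ^ i.val * b ^ j.val) • x := by
    rw [LinearEquiv.mul_apply, B.pow_apply_eq_smul hb, map_smul, A.pow_apply_eq_smul hμ,
      smul_smul, mul_comm]
  exact hg.not_linearIndependent (hfree _ (by simpa using hij)) (heigen hx₀ hb₀)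
    (heq ▸ heigen hx₁ hb₁) hind

lemma diagEquiv_single (d : Fin 3 → ℂˣ) (j : Fin 3) :
    diagEquiv d (Pi.single j 1) = (d j : ℂ) • Pi.single j 1 := by
  ext i
  rcases eq_or_ne i j with rfl | h
  · simp [diagEquiv, LinearEquiv.smulOfUnit, Units.smul_def]
  · simp [diagEquiv, h]

lemma cycEquiv_single (j : Fin 3) : cycEquiv (Pi.single j 1) = Pi.single (j - 1) 1 := by
  ext i
  simp [cycEquiv, Pi.single_apply, eq_sub_iff_add_eq]

lemma Module.Basis.apply_eq_smul_conj {b : Module.Basis (Fin 3) ℂ ℂ³} {φ χ : ℂ³ ≃ₗ[ℂ] ℂ³}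
    {a : ℂ} (h : ∀ j, φ (b j) = a • b.equivFun.symm (χ (Pi.single j 1))) (v : ℂ³) :
    φ v = a • ((b.equivFun.symm.symm.trans χ).trans b.equivFun.symm) v := by
  have : (φ : ℂ³ →ₗ[ℂ] ℂ³) =
      a • ((b.equivFun.symm.symm.trans χ).trans b.equivFun.symm : ℂ³ →ₗ[ℂ] ℂ³) :=
    b.ext fun j ↦ by simpa [Finsupp.single_eq_pi_single] using h j
  exact LinearMap.congr_fun this v

lemma exists_normal_form_of_apply_apply_eq_smul {A B : ℂ³ ≃ₗ[ℂ] ℂ³} {ζ : ℂ}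
    (hζ : IsPrimitiveRoot ζ 3) (hAB : ∀ v, A (B v) = ζ • B (A v)) {c : ℂ} (hc : c ≠ 0)
    (hB : ∀ v, (B ^ 3) v = c ^ 3 • v) {ω : ℂˣ} (hω : (ω : ℂ) = ζ ^ 2) :
    ∃ (ψ : ℂ³ ≃ₗ[ℂ] ℂ³) (a : ℂ),
      (∀ v, A v = a • ((ψ.symm.trans (diagEquiv ![1, ω, ω ^ 2])).trans ψ) v) ∧
      ∀ v, B v = c • ((ψ.symm.trans cycEquiv).trans ψ) v := by
  obtain ⟨a, ha⟩ := Module.End.exists_eigenvalue (A : Module.End ℂ ℂ³)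
  obtain ⟨v, hv⟩ := ha.exists_hasEigenvector
  have hAv : A v = a • v := hv.apply_eq_smul
  set f : ℕ → ℂ³ := fun n ↦ (c⁻¹) ^ n • (B ^ n) v with hf
  have hf_periodic : Function.Periodic f 3 := fun n ↦ by
    simp only [hf, pow_add, LinearEquiv.mul_apply, hB, map_smul, smul_smul]
    field_simp
  have hBf (n : ℕ) : B (f n) = c • f (n + 1) := by
    simp only [hf, map_smul, pow_succ', LinearEquiv.mul_apply, smul_smul]
    field_simp
  have hAf (n : ℕ) : A (f n) = (a * ζ ^ n) • f n := by
    simp only [hf, map_smul, LinearEquiv.apply_pow_apply_of_apply_apply_eq_smul hAB, hAv,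
      smul_smul]
    ring_nf
  set w : Fin 3 → ℂ³ := fun j ↦ f (2 * j.val) with hw
  have hAw (j : Fin 3) : A (w j) = (a * (ω : ℂ) ^ j.val) • w j := by
    rw [hw, hAf, hω, ← pow_mul]
  have hBw (j : Fin 3) : B (w j) = c • w (j - 1) := by
    change B (f _) = c • f _
    rw [hBf, ← hf_periodic.map_mod_nat, ← hf_periodic.map_mod_nat (2 * (j - 1).val)]
    fin_cases j <;> rfl
  have hw0 (j : Fin 3) : w j ≠ 0 :=
    smul_ne_zero (pow_ne_zero _ (inv_ne_zero hc)) ((B ^ _).map_ne_zero_iff.2 hv.2)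
  have hind : LinearIndependent ℂ w := by
    refine Module.End.eigenvectors_linearIndependent' (A : Module.End ℂ ℂ³) _
      (fun i j hij ↦ ?_) w fun j ↦ ⟨Module.End.mem_eigenspace_iff.2 (hAw j), hw0 j⟩
    have ha0 : a ≠ 0 := by
      rintro rfl
      exact hv.2 (A.map_eq_zero_iff.1 (by simpa using hAv))
    have hω3 : IsPrimitiveRoot (ω : ℂ) 3 := hω ▸ hζ.pow_of_coprime 2 (by norm_num)
    exact Fin.ext (hω3.pow_inj i.isLt j.isLt (mul_left_cancel₀ ha0 hij))
  classical
  let b := basisOfPiSpaceOfLinearIndependent hind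
  have hd (j : Fin 3) : ((![1, ω, ω ^ 2] j : ℂˣ) : ℂ) = (ω : ℂ) ^ j.val := by
    fin_cases j <;> simp
  refine ⟨b.equivFun.symm, a, b.apply_eq_smul_conj fun j ↦ ?_, b.apply_eq_smul_conj fun j ↦ ?_⟩
  · simp [b, hAw, diagEquiv_single, hd, mul_smul]
  · simp [b, hBw, cycEquiv_single]

theorem Z3Z3_action_on_P2_normal_form_general
    (ρ : Multiplicative (ZMod 3 × ZMod 3) →* Equiv.Perm P2)
    -- the action is by projective linear transformations
    (hproj : ∀ g, ∃ φ : (Fin 3 → ℂ) ≃ₗ[ℂ] (Fin 3 → ℂ), ∀ p, ρ g p = projMap φ p)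
    -- the action is free outside a finite set
    (hfree : ∀ g, g ≠ 1 → {p : P2 | ρ g p = p}.Finite) :
    ∃ g₁ g₂ : Multiplicative (ZMod 3 × ZMod 3), Subgroup.closure {g₁, g₂} = ⊤ ∧
      ∃ (ψ : (Fin 3 → ℂ) ≃ₗ[ℂ] (Fin 3 → ℂ)) (ω : ℂˣ), IsPrimitiveRoot (ω : ℂ) 3 ∧
        (∀ p, ρ g₁ p = projMap ((ψ.symm.trans (diagEquiv ![1, ω, ω ^ 2])).trans ψ) p) ∧
        (∀ p, ρ g₂ p = projMap ((ψ.symm.trans cycEquiv).trans ψ) p) := by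
  obtain ⟨A, hA⟩ := hproj (.ofAdd (1, 0))
  obtain ⟨B, hB⟩ := hproj (.ofAdd (0, 1))
  obtain ⟨ζ, hAB⟩ := IsProjLift.exists_apply_apply_eq_smul (Commute.all _ _) hA hB
  obtain ⟨c₃, hB₃⟩ := IsProjLift.exists_pow_eq_smul hB (n := 3) (by decide)
  obtain ⟨c, hc⟩ := IsAlgClosed.exists_pow_nat_eq (c₃ : ℂ) three_pos
  have hζ1 : (ζ : ℂ) ≠ 1 := fun h ↦
    false_of_isProjLift_of_commute hfree hA hB (by simpa [h] using hAB)
  have hζ : IsPrimitiveRoot (ζ : ℂ) 3 := IsPrimitiveRoot.iff_orderOf.2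
    (orderOf_eq_prime (LinearEquiv.pow_eq_one_of_apply_apply_eq_smul hAB c₃.ne_zero hB₃) hζ1)
  obtain ⟨ψ, a, hAψ, hBψ⟩ := exists_normal_form_of_apply_apply_eq_smul hζ hAB
    (ne_zero_pow three_ne_zero (hc ▸ c₃.ne_zero)) (hc ▸ hB₃) (ω := ζ ^ 2)
    (Units.val_pow_eq_pow_val _ _)
  refine ⟨_, _, ZMod.closure_ofAdd_prod_eq_top, ψ, ζ ^ 2, ?_, fun p ↦ ?_, fun p ↦ ?_⟩
  · simpa using hζ.pow_of_coprime 2 (by norm_num)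
  · rw [hA p, projMap_eq_of_forall_eq_smul hAψ]
  · rw [hB p, projMap_eq_of_forall_eq_smul hBψ]

/-- Suppose `G = (ℤ/3)²` acts faithfully on `ℙ²(ℂ)` by projective transformations,
with the action free outside a finite set (every nontrivial element has only finitely
many fixed points). Then there exist generators `g₁, g₂` of `G` and homogeneous
coordinates (i.e. a linear change of coordinates `ψ`) in which
`g₁(x₀:x₁:x₂) = (x₀: ωx₁: ω²x₂)` and `g₂(x₀:x₁:x₂) = (x₁:x₂:x₀)`,
where `ω` is a primitive third root of unity. -/
theorem Z3Z3_action_on_P2_normal_form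
    (ρ : Multiplicative (ZMod 3 × ZMod 3) →* Equiv.Perm P2)
    (hfaithful : Function.Injective ρ)
    -- the action is by projective linear transformations
    (hproj : ∀ g, ∃ φ : (Fin 3 → ℂ) ≃ₗ[ℂ] (Fin 3 → ℂ), ∀ p, ρ g p = projMap φ p)
    -- the action is free outside a finite set
    (hfree : ∀ g, g ≠ 1 → {p : P2 | ρ g p = p}.Finite) :
    ∃ g₁ g₂ : Multiplicative (ZMod 3 × ZMod 3), Subgroup.closure {g₁, g₂} = ⊤ ∧
      ∃ (ψ : (Fin 3 → ℂ) ≃ₗ[ℂ] (Fin 3 → ℂ)) (ω : ℂˣ), IsPrimitiveRoot (ω : ℂ) 3 ∧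
        (∀ p, ρ g₁ p = projMap ((ψ.symm.trans (diagEquiv ![1, ω, ω ^ 2])).trans ψ) p) ∧
        (∀ p, ρ g₂ p = projMap ((ψ.symm.trans cycEquiv).trans ψ) p) :=
  Z3Z3_action_on_P2_normal_form_general ρ hproj hfree
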